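/- Assume hypotheses (H1)–(H3) for a smooth Hamiltonian H on the slow–fast phase space M = ℝ^{2r} × ℝ^{2k}, with momentum map J satisfying the adiabatic condition ⟨d₁J⟩ = 0. Then the S¹-action generated by Υ := (1/ω)X_H^{(0)} is Hamiltonian with respect to the averaged form: for every ε ≠ 0, every m ∈ M and every v ∈ ℝ^{2r+2k}, ⟨σ_ε⟩_m(Υ(m), v) = −DJ_m(v), i.e. i_Υ⟨σ_ε⟩ = −dJ. -/

import Mathlib

open Real MeasureTheory Asymptotics Set

noncomputable section

/-- Fast factor `ℝ^{2r}` with variables `(y, x)`. -/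
abbrev Fast (r : ℕ) := (Fin r → ℝ) × (Fin r → ℝ)

/-- Slow factor `ℝ^{2k}` with variables `(p, q)`. -/
abbrev Slow (k : ℕ) := (Fin k → ℝ) × (Fin k → ℝ)

/-- The slow-fast phase space `M = ℝ^{2r} × ℝ^{2k}`. -/
abbrev SF (r k : ℕ) := Fast r × Slow k

/-- The fast Hamiltonian vector field `X_H^{(0)}`: `ẏ = -∂H/∂x`, `ẋ = ∂H/∂y`,
zero slow components. -/
def fastVF {r k : ℕ} (H : SF r k → ℝ) (m : SF r k) : SF r k :=
  ((fun i => -(fderiv ℝ H m ((0, Pi.single i 1), 0)),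
    fun i => fderiv ℝ H m ((Pi.single i 1, 0), 0)), 0)

/-- The slow Hamiltonian vector field `X_H^{(1)}`: `ṗ = -∂H/∂q`, `q̇ = ∂H/∂p`,
zero fast components. -/
def slowVF {r k : ℕ} (H : SF r k → ℝ) (m : SF r k) : SF r k :=
  (0, (fun j => -(fderiv ℝ H m (0, (0, Pi.single j 1))),
       fun j => fderiv ℝ H m (0, (Pi.single j 1, 0))))

/-- The differential of `f` in the slow variables only, `d₁f`, as a 1-form. -/
def d1Form {r k : ℕ} (f : SF r k → ℝ) (m w : SF r k) : ℝ :=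
  fderiv ℝ f m ((0 : Fast r), w.2)

/-- Average `⟨α⟩` of a 1-form `α` along a `2π`-periodic flow `φ`:
`⟨α⟩_m(w) = (1/2π)∫₀^{2π} α_{φ(t,m)}(D_mφ(t,·) w) dt`. -/
def avg1 {r k : ℕ} (φ : ℝ → SF r k → SF r k) (α : SF r k → SF r k → ℝ)
    (m w : SF r k) : ℝ :=
  (1 / (2 * π)) * ∫ t in (0:ℝ)..(2 * π), α (φ t m) (fderiv ℝ (φ t) m w)

/-- Integrating operator `S(α)` on a 1-form `α` along a `2π`-periodic flow `φ`. -/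
def intOp1 {r k : ℕ} (φ : ℝ → SF r k → SF r k) (α : SF r k → SF r k → ℝ)
    (m w : SF r k) : ℝ :=
  (1 / (2 * π)) * ∫ t in (0:ℝ)..(2 * π), (t - π) * α (φ t m) (fderiv ℝ (φ t) m w)

/-- The canonical fast symplectic form `σ₀((u_y,u_x),(v_y,v_x)) = u_y·v_x − u_x·v_y`. -/
def sigma0 {r : ℕ} (u v : Fast r) : ℝ :=
  ∑ i : Fin r, u.1 i * v.2 i - ∑ i : Fin r, u.2 i * v.1 i

/-- The canonical slow symplectic form `σ₁((u_p,u_q),(v_p,v_q)) = u_p·v_q − u_q·v_p`. -/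
def sigma1 {k : ℕ} (u v : Slow k) : ℝ :=
  ∑ j : Fin k, u.1 j * v.2 j - ∑ j : Fin k, u.2 j * v.1 j

/-- The singular symplectic form `σ_ε = π₀^*σ₀ + (1/ε) π₁^*σ₁` on `M`. -/
def sigmaE {r k : ℕ} (ε : ℝ) (u v : SF r k) : ℝ :=
  sigma0 u.1 v.1 + (1 / ε) * sigma1 u.2 v.2

/-- The average of a 2-form `β` along a `2π`-periodic flow `φ`:
`⟨β⟩_m(u,v) = (1/2π)∫₀^{2π} β_{φ(t,m)}(D_mφ(t,·)u, D_mφ(t,·)v) dt`. -/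
def avg2 {r k : ℕ} (φ : ℝ → SF r k → SF r k) (β : SF r k → SF r k → SF r k → ℝ)
    (m u v : SF r k) : ℝ :=
  (1 / (2 * π)) *
    ∫ t in (0:ℝ)..(2 * π), β (φ t m) (fderiv ℝ (φ t) m u) (fderiv ℝ (φ t) m v)

/-!
Since `Υ = ω⁻¹ X_H^{(0)}` has no slow component, `σ_ε(Υ, w) = ω⁻¹ σ₀(X_H^{(0)}, w) = -ω⁻¹ d₀H(w)`,
which by (H2) is `-dJ(w) + d₁J(w)`. Antisymmetry of `σ₀` gives `dJ(Υ) = 0`, so `J` is invariant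
under the flow `φ` of `Υ`, and `φ_t` pushes `Υ` forward to itself by the group law of the flow
(uniqueness of integral curves; `Υ = ∂ₜφ(0, ·)` is smooth because `φ` is). Hence the integrand of
`⟨σ_ε⟩_m(Υ, v)` at time `t` is `-dJ_m(v) + (d₁J)_{φ_t m}(Dφ_t v)`, and averaging with (H3) leaves
`-dJ_m(v)`.
-/

open Filter Function

section Flow

variable {E : Type*} [NormedAddCommGroup E] [NormedSpace ℝ E]

/-- The agreement set of two integral curves is open by local Lipschitz uniqueness and closed by
continuity. -/
theorem eq_of_hasDerivAt_of_contDiff {V : E → E} (hV : ContDiff ℝ 1 V) {f g : ℝ → E}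
    (hf : ∀ t, HasDerivAt f (V (f t)) t) (hg : ∀ t, HasDerivAt g (V (g t)) t)
    {t₀ : ℝ} (h : f t₀ = g t₀) : f = g := by
  have hfc : Continuous f := continuous_iff_continuousAt.2 fun t => (hf t).continuousAt
  have hgc : Continuous g := continuous_iff_continuousAt.2 fun t => (hg t).continuousAt
  have hopen : IsOpen {t | f t = g t} := by
    refine isOpen_iff_mem_nhds.2 fun t (ht : f t = g t) => ?_
    obtain ⟨K, U, hU, hLip⟩ := (hV.contDiffAt (x := f t)).exists_lipschitzOnWith
    exact ODE_solution_unique_of_eventually (v := fun _ => V) (s := fun _ => U)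
      (.of_forall fun _ => hLip)
      ((Eventually.of_forall hf).and (hfc.continuousAt.preimage_mem_nhds hU))
      ((Eventually.of_forall hg).and (hgc.continuousAt.preimage_mem_nhds (ht ▸ hU))) ht
  have huniv := IsClopen.eq_univ ⟨isClosed_eq hfc hgc, hopen⟩ ⟨t₀, h⟩
  exact funext fun t => (huniv ▸ mem_univ t : t ∈ {t | f t = g t})

structure IsFlow (V : E → E) (φ : ℝ → E → E) : Prop where
  apply_zero : ∀ m, φ 0 m = m
  hasDerivAt : ∀ t m, HasDerivAt (fun s => φ s m) (V (φ t m)) t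

namespace IsFlow

variable {V : E → E} {φ : ℝ → E → E}

theorem hasDerivAt_zero (h : IsFlow V φ) (m : E) : HasDerivAt (fun s => φ s m) (V m) 0 := by
  simpa only [h.apply_zero] using h.hasDerivAt 0 m

/-- `V m = ∂ₜφ(0, m)`, so the generator loses one derivative with respect to the flow. -/
theorem contDiff_generator {n : WithTop ℕ∞} (h : IsFlow V φ)
    (hφ : ContDiff ℝ (n + 1) (uncurry φ)) : ContDiff ℝ n V := by
  have hswap : ContDiff ℝ (n + 1) (uncurry fun m s => φ s m) :=
    hφ.comp (contDiff_snd.prodMk contDiff_fst)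
  convert hswap.fderiv_apply (g := fun _ => 0) (k := fun _ => 1) contDiff_const contDiff_const
    le_rfl using 1
  exact funext fun m => (h.hasDerivAt_zero m).deriv.symm

theorem add (h : IsFlow V φ) (hV : ContDiff ℝ 1 V) (t s : ℝ) (m : E) :
    φ t (φ s m) = φ (t + s) m := by
  refine congrFun (eq_of_hasDerivAt_of_contDiff hV (fun t => h.hasDerivAt t (φ s m))
    (fun t => (h.hasDerivAt (t + s) m).comp_add_const t s) (t₀ := 0) ?_) t
  simp only [h.apply_zero, zero_add]

theorem fderiv_apply_generator (h : IsFlow V φ) (hV : ContDiff ℝ 1 V) {t : ℝ} {m : E}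
    (hd : DifferentiableAt ℝ (φ t) m) : fderiv ℝ (φ t) m (V m) = V (φ t m) := by
  have hcomp : HasDerivAt (fun s => φ t (φ s m)) (fderiv ℝ (φ t) m (V m)) 0 :=
    hd.hasFDerivAt.comp_hasDerivAt_of_eq 0 (h.hasDerivAt_zero m) (h.apply_zero m).symm
  have hshift : HasDerivAt (fun s => φ (t + s) m) (V (φ t m)) 0 := by
    simpa only [add_zero] using (h.hasDerivAt (t + 0) m).comp_const_add t 0
  simp only [h.add hV] at hcomp
  exact hcomp.unique hshift

theorem comp_eq_of_fderiv_apply_eq_zero {G : Type*} [NormedAddCommGroup G] [NormedSpace ℝ G]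
    (h : IsFlow V φ) {F : E → G} (hF : Differentiable ℝ F) (hFV : ∀ p, fderiv ℝ F p (V p) = 0)
    (t : ℝ) : F ∘ φ t = F := by
  funext m
  have hderiv (s : ℝ) : HasDerivAt (fun s => F (φ s m)) 0 s := by
    have := (hF _).hasFDerivAt.comp_hasDerivAt s (h.hasDerivAt s m)
    rwa [hFV] at this
  simpa only [comp_apply, h.apply_zero] using
    is_const_of_deriv_eq_zero (fun s => (hderiv s).differentiableAt) (fun s => (hderiv s).deriv)
      t 0

end IsFlow

theorem fderiv_apply_fderiv_of_comp_eq {G : Type*} [NormedAddCommGroup G] [NormedSpace ℝ G]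
    {g : E → E} {F : E → G} (hgF : F ∘ g = F) {m : E} (hF : DifferentiableAt ℝ F (g m))
    (hg : DifferentiableAt ℝ g m) (v : E) :
    fderiv ℝ F (g m) (fderiv ℝ g m v) = fderiv ℝ F m v := by
  rw [← ContinuousLinearMap.comp_apply, ← fderiv_comp m hF hg, hgF]

end Flow

section SlowFast

variable {r k : ℕ}

theorem sigma0_self (u : Fast r) : sigma0 u u = 0 := by
  rw [sigma0, sub_eq_zero]
  exact Finset.sum_congr rfl fun i _ => mul_comm _ _

theorem sigma0_smul_left (c : ℝ) (u v : Fast r) : sigma0 (c • u) v = c * sigma0 u v := by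
  simp only [sigma0, Prod.smul_fst, Prod.smul_snd, Pi.smul_apply, smul_eq_mul, mul_sub,
    Finset.mul_sum, mul_assoc]

theorem apply_fast_eq_sum (L : SF r k →L[ℝ] ℝ) (u : Fast r) :
    L (u, 0) = ∑ i, u.1 i * L ((Pi.single i 1, 0), 0)
      + ∑ i, u.2 i * L ((0, Pi.single i 1), 0) := by
  have hu : ((u, 0) : SF r k) = ∑ i, u.1 i • ((Pi.single i 1, 0), 0)
      + ∑ i, u.2 i • ((0, Pi.single i 1), 0) := by
    conv_lhs => rw [← Prod.mk.eta (p := u), pi_eq_sum_univ' u.1, pi_eq_sum_univ' u.2]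
    simp [Prod.smul_mk, Prod.fst_sum, Prod.snd_sum, Prod.ext_iff]
  rw [hu, map_add, map_sum, map_sum]
  simp only [map_smul, smul_eq_mul]

theorem sigma0_fastVF (H : SF r k → ℝ) (p : SF r k) (u : Fast r) :
    sigma0 (fastVF H p).1 u = -fderiv ℝ H p (u, 0) := by
  rw [apply_fast_eq_sum, sigma0]
  simp only [fastVF, neg_mul, Finset.sum_neg_distrib, mul_comm (u.1 _), mul_comm (u.2 _)]
  ring

theorem fderiv_apply_fastVF (H : SF r k → ℝ) (p : SF r k) : fderiv ℝ H p (fastVF H p) = 0 := by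
  have h := (sigma0_fastVF H p (fastVF H p).1).symm
  rwa [sigma0_self, neg_eq_zero] at h

theorem sigmaE_smul_fastVF (ε c : ℝ) (H : SF r k → ℝ) (p w : SF r k) :
    sigmaE ε (c • fastVF H p) w = -(c * fderiv ℝ H p (w.1, 0)) := by
  rw [sigmaE, Prod.smul_fst, sigma0_smul_left, sigma0_fastVF]
  simp [sigma1, fastVF]

theorem fderiv_eq_fast_add_d1Form (J : SF r k → ℝ) (p w : SF r k) :
    fderiv ℝ J p w = fderiv ℝ J p (w.1, 0) + d1Form J p w := by
  rw [d1Form, ← map_add, Prod.mk_add_mk, add_zero, zero_add]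

theorem continuous_d1Form_fderiv_apply {φ : ℝ → SF r k → SF r k} (hφ : ContDiff ℝ 1 (uncurry φ))
    {J : SF r k → ℝ} (hJ : ContDiff ℝ 1 J) (m v : SF r k) :
    Continuous fun t => d1Form J (φ t m) (fderiv ℝ (φ t) m v) := by
  have hDφ : Continuous fun t => fderiv ℝ (φ t) m v :=
    (hφ.fderiv_apply (n := 0) contDiff_const contDiff_const le_rfl).continuous
  exact ((hJ.continuous_fderiv one_ne_zero).comp
    (hφ.continuous.comp (continuous_id.prodMk continuous_const))).clm_apply
    (continuous_const.prodMk hDφ.snd)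

section Momentum

variable {H J ω : SF r k → ℝ}

theorem fderiv_apply_smul_fastVF_eq_zero
    (hH2 : ∀ m (u : Fast r), fderiv ℝ J m (u, 0) = (1 / ω m) * fderiv ℝ H m (u, 0))
    (p : SF r k) : fderiv ℝ J p ((ω p)⁻¹ • fastVF H p) = 0 := by
  rw [map_smul, smul_eq_mul]
  exact mul_eq_zero_of_right _
    ((hH2 p _).trans (mul_eq_zero_of_right _ (fderiv_apply_fastVF H p)))

theorem sigmaE_smul_fastVF_eq
    (hH2 : ∀ m (u : Fast r), fderiv ℝ J m (u, 0) = (1 / ω m) * fderiv ℝ H m (u, 0))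
    (ε : ℝ) (p w : SF r k) :
    sigmaE ε ((ω p)⁻¹ • fastVF H p) w = -fderiv ℝ J p w + d1Form J p w := by
  rw [sigmaE_smul_fastVF, fderiv_eq_fast_add_d1Form J, hH2, one_div]
  ring

end Momentum

end SlowFast

theorem stmt13_general {r k : ℕ} (H : SF r k → ℝ) (ω : SF r k → ℝ) (φ : ℝ → SF r k → SF r k)
    (hφ_smooth : ContDiff ℝ (⊤ : ℕ∞) (fun p : ℝ × SF r k => φ p.1 p.2))
    (hφ0 : ∀ m, φ 0 m = m)
    (hφ' : ∀ t m, HasDerivAt (fun s => φ s m) ((ω (φ t m))⁻¹ • fastVF H (φ t m)) t)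
    (J : SF r k → ℝ) (hJ_smooth : ContDiff ℝ (⊤ : ℕ∞) J)
    (hH2 : ∀ m (u : Fast r),
      fderiv ℝ J m (u, (0 : Slow k)) = (1 / ω m) * fderiv ℝ H m (u, 0))
    (hH3 : ∀ m w, avg1 φ (d1Form J) m w = 0) :
    ∀ ε : ℝ, ε ≠ 0 → ∀ m v,
      avg2 φ (fun _ => sigmaE ε) m ((ω m)⁻¹ • fastVF H m) v = -(fderiv ℝ J m v) := by
  intro ε _ m v
  have hflow : IsFlow (fun p => (ω p)⁻¹ • fastVF H p) φ := ⟨hφ0, hφ'⟩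
  have hΥ := hflow.contDiff_generator (n := 1) (hφ_smooth.of_le (WithTop.coe_le_coe.2 le_top))
  have hJ : Differentiable ℝ J := hJ_smooth.differentiable (by simp)
  have hφt (t : ℝ) : Differentiable ℝ (φ t) :=
    (hφ_smooth.comp (contDiff_const.prodMk contDiff_id)).differentiable (by simp)
  have hJφ (t : ℝ) : J ∘ φ t = J :=
    hflow.comp_eq_of_fderiv_apply_eq_zero hJ (fderiv_apply_smul_fastVF_eq_zero hH2) t
  have hintegrand (t : ℝ) : sigmaE ε (fderiv ℝ (φ t) m ((ω m)⁻¹ • fastVF H m))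
      (fderiv ℝ (φ t) m v) = -fderiv ℝ J m v + d1Form J (φ t m) (fderiv ℝ (φ t) m v) := by
    rw [hflow.fderiv_apply_generator hΥ (hφt t m), sigmaE_smul_fastVF_eq hH2,
      fderiv_apply_fderiv_of_comp_eq (hJφ t) (hJ _) (hφt t m)]
  have hcont := continuous_d1Form_fderiv_apply (hφ_smooth.of_le (WithTop.coe_le_coe.2 le_top))
    (hJ_smooth.of_le (WithTop.coe_le_coe.2 le_top)) m v
  have hmean := hH3 m v
  rw [avg1] at hmean
  rw [avg2, intervalIntegral.integral_congr fun t _ => hintegrand t,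
    intervalIntegral.integral_add intervalIntegrable_const (hcont.intervalIntegrable _ _),
    intervalIntegral.integral_const, mul_add, hmean, smul_eq_mul, sub_zero, add_zero]
  field_simp

/-- Under hypotheses (H1)-(H3), the `S¹`-action generated by
`Υ = (1/ω)X_H^{(0)}` is Hamiltonian for the averaged form, with momentum map `J`:
`i_Υ⟨σ_ε⟩ = −dJ` for every `ε ≠ 0`. -/
theorem stmt13 {r k : ℕ} (H : SF r k → ℝ) (hH : ContDiff ℝ (⊤ : ℕ∞) H)
    (ω : SF r k → ℝ) (hω_smooth : ContDiff ℝ (⊤ : ℕ∞) ω) (hω_pos : ∀ m, 0 < ω m)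
    (φ : ℝ → SF r k → SF r k)
    (hφ_smooth : ContDiff ℝ (⊤ : ℕ∞) (fun p : ℝ × SF r k => φ p.1 p.2))
    (hφ0 : ∀ m, φ 0 m = m)
    (hφ' : ∀ t m, HasDerivAt (fun s => φ s m) ((ω (φ t m))⁻¹ • fastVF H (φ t m)) t)
    (hper : ∀ t m, φ (t + 2 * π) m = φ t m)
    (J : SF r k → ℝ) (hJ_smooth : ContDiff ℝ (⊤ : ℕ∞) J)
    (hH2 : ∀ m (u : Fast r),
      fderiv ℝ J m (u, (0 : Slow k)) = (1 / ω m) * fderiv ℝ H m (u, 0))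
    (hH3 : ∀ m w, avg1 φ (d1Form J) m w = 0) :
    ∀ ε : ℝ, ε ≠ 0 → ∀ m v,
      avg2 φ (fun _ => sigmaE ε) m ((ω m)⁻¹ • fastVF H m) v = -(fderiv ℝ J m v) :=
  stmt13_general H ω φ hφ_smooth hφ0 hφ' J hJ_smooth hH2 hH3
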